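/- arXiv:1609.04731 — 2 statements merged into one kernel-verified Lean document; each statement's English description precedes it below -/
import Mathlib

section
/- For α, β, γ ∈ ℚ̄, the polynomial δ = Δ₁·Δ₂·Δ₃ ∈ ℚ̄[t], where Δ₁ = α − 2αt² − 4βt² + αt⁴, Δ₂ = α − γ − 2αt² − 2γt² + αt⁴ − γt⁴, Δ₃ = γ − 4βt² + 2γt² + γt⁴, is a separable polynomial if and only if αβγ(α+β)(α−γ)(β−γ)(αβ − αγ − βγ) ≠ 0. -/
open Polynomial

set_option maxHeartbeats 2000000

noncomputable section

/-- `ℚ̄`, an algebraic closure of `ℚ`. -/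
abbrev Qbar : Type := AlgebraicClosure ℚ

/-- `Δ₁ = α − 2αt² − 4βt² + αt⁴` in `ℚ̄[t]`. -/
def Δ₁ (α β : Qbar) : Polynomial Qbar :=
  C α - 2 * C α * X ^ 2 - 4 * C β * X ^ 2 + C α * X ^ 4

/-- `Δ₂ = α − γ − 2αt² − 2γt² + αt⁴ − γt⁴` in `ℚ̄[t]`. -/
def Δ₂ (α γ : Qbar) : Polynomial Qbar :=
  C α - C γ - 2 * C α * X ^ 2 - 2 * C γ * X ^ 2 + C α * X ^ 4 - C γ * X ^ 4

/-- `Δ₃ = γ − 4βt² + 2γt² + γt⁴` in `ℚ̄[t]`. -/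
def Δ₃ (β γ : Qbar) : Polynomial Qbar :=
  C γ - 4 * C β * X ^ 2 + 2 * C γ * X ^ 2 + C γ * X ^ 4

private lemma bez {p q U V : Polynomial Qbar} {d : Qbar} (hd : d ≠ 0)
    (h : U * p + V * q = C d) : IsCoprime p q := by
  refine ⟨C d⁻¹ * U, C d⁻¹ * V, ?_⟩
  rw [mul_assoc, mul_assoc, ← mul_add, h, ← C_mul, inv_mul_cancel₀ hd, C_1]

private lemma not_unit_X2_sub_one : ¬ IsUnit (X ^ 2 - 1 : Polynomial Qbar) := by
  have h : (X ^ 2 - 1 : Polynomial Qbar).natDegree = 2 := by compute_degree!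
  intro hu
  simpa [h] using natDegree_eq_zero_of_isUnit hu

private lemma not_unit_X2_add_one : ¬ IsUnit (X ^ 2 + 1 : Polynomial Qbar) := by
  have h : (X ^ 2 + 1 : Polynomial Qbar).natDegree = 2 := by compute_degree!
  intro hu
  simpa [h] using natDegree_eq_zero_of_isUnit hu

theorem separable_iff (α β γ : Qbar) :
    (Δ₁ α β * Δ₂ α γ * Δ₃ β γ).Separable ↔
      α * β * γ * (α + β) * (α - γ) * (β - γ) * (α * β - α * γ - β * γ) ≠ 0 := by
  constructor
  · intro hsep h0
    have hsq := hsep.squarefree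
    rcases mul_eq_zero.mp h0 with h1 | hS
    · rcases mul_eq_zero.mp h1 with h1 | hBC
      · rcases mul_eq_zero.mp h1 with h1 | hAC
        · rcases mul_eq_zero.mp h1 with h1 | hAB
          · rcases mul_eq_zero.mp h1 with h1 | hC
            · rcases mul_eq_zero.mp h1 with hA | hB
              · -- α = 0
                subst hA
                refine not_isUnit_X (hsq X ⟨-4 * C β * (Δ₂ 0 γ * Δ₃ β γ), ?_⟩)
                unfold Δ₁; simp only [map_zero]; ring
              · -- β = 0
                subst hB
                refine not_unit_X2_sub_one (hsq (X ^ 2 - 1)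
                  ⟨C α * (Δ₂ α γ * Δ₃ 0 γ), ?_⟩)
                unfold Δ₁; simp only [map_zero]; ring
            · -- γ = 0
              subst hC
              refine not_isUnit_X (hsq X ⟨-4 * C β * (Δ₁ α β * Δ₂ α 0), ?_⟩)
              unfold Δ₃; simp only [map_zero]; ring
          · -- α + β = 0
            have hb : β = -α := eq_neg_of_add_eq_zero_right hAB
            subst hb
            refine not_unit_X2_add_one (hsq (X ^ 2 + 1)
              ⟨C α * (Δ₂ α γ * Δ₃ (-α) γ), ?_⟩)
            unfold Δ₁; simp only [map_neg]; ring
        · -- α - γ = 0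
          have hg : α = γ := sub_eq_zero.mp hAC
          subst hg
          refine not_isUnit_X (hsq X ⟨-4 * C α * (Δ₁ α β * Δ₃ β α), ?_⟩)
          unfold Δ₂; ring
      · -- β - γ = 0
        have hg : β = γ := sub_eq_zero.mp hBC
        subst hg
        refine not_unit_X2_sub_one (hsq (X ^ 2 - 1)
          ⟨C β * (Δ₁ α β * Δ₂ α β), ?_⟩)
        unfold Δ₃; ring
    · -- α β - α γ - β γ = 0
      by_cases hA : α = 0
      · subst hA
        refine not_isUnit_X (hsq X ⟨-4 * C β * (Δ₂ 0 γ * Δ₃ β γ), ?_⟩)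
        unfold Δ₁; simp only [map_zero]; ring
      · by_cases hAC : α = γ
        · subst hAC
          refine not_isUnit_X (hsq X ⟨-4 * C α * (Δ₁ α β * Δ₃ β α), ?_⟩)
          unfold Δ₂; ring
        have key : C α * Δ₂ α γ = C (α - γ) * Δ₁ α β := by
          have h2 : C α * Δ₂ α γ - C (α - γ) * Δ₁ α β =
              4 * C (α * β - α * γ - β * γ) * X ^ 2 := by
            unfold Δ₁ Δ₂; simp only [map_sub, map_mul]; ring
          rw [hS, map_zero] at h2
          rw [← sub_eq_zero]
          simpa using h2
        have key2 : Δ₂ α γ = C (α⁻¹ * (α - γ)) * Δ₁ α β := by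
          rw [map_mul, mul_assoc, ← key, ← mul_assoc, ← map_mul,
            inv_mul_cancel₀ hA, map_one, one_mul]
        have hdvd : Δ₁ α β * Δ₁ α β ∣ Δ₁ α β * Δ₂ α γ * Δ₃ β γ :=
          ⟨C (α⁻¹ * (α - γ)) * Δ₃ β γ, by rw [key2]; ring⟩
        have hdeg : (Δ₁ α β).natDegree = 4 := by unfold Δ₁; compute_degree!
        exact absurd (natDegree_eq_zero_of_isUnit (hsq _ hdvd)) (by rw [hdeg]; norm_num)
  · intro h
    have hA : α ≠ 0 := fun e => h (by rw [e]; ring)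
    have hB : β ≠ 0 := fun e => h (by rw [e]; ring)
    have hC : γ ≠ 0 := fun e => h (by rw [e]; ring)
    have hAB : α + β ≠ 0 := fun e => h (by rw [e]; ring)
    have hAC : α - γ ≠ 0 := fun e => h (by rw [e]; ring)
    have hBC : β - γ ≠ 0 := fun e => h (by rw [e]; ring)
    have hS : α * β - α * γ - β * γ ≠ 0 := fun e => h (by rw [e]; ring)
    have sep1 : (Δ₁ α β).Separable := by
      have hder : derivative (Δ₁ α β) = 4 * C α * X ^ 3 - 4 * C α * X - 8 * C β * X := by
        unfold Δ₁; simp [map_ofNat]; ring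
      rw [Polynomial.separable_def, hder]
      refine bez (d := 256 * α ^ 3 * β * (α + β))
        (by simp [hA, hB, hAB]) (U := (((256 : Polynomial Qbar) * C α ^ 2 * C β ^ 2 + (256 : Polynomial Qbar) * C α ^ 3 * C β) + ((-128 : Polynomial Qbar) * C α ^ 3 * C β + (-64 : Polynomial Qbar) * C α ^ 4) * X ^ 2)) (V := (((-128 : Polynomial Qbar) * C α ^ 2 * C β ^ 2 + (-128 : Polynomial Qbar) * C α ^ 3 * C β + (-16 : Polynomial Qbar) * C α ^ 4) * X + ((32 : Polynomial Qbar) * C α ^ 3 * C β + (16 : Polynomial Qbar) * C α ^ 4) * X ^ 3)) ?_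
      unfold Δ₁
      simp only [map_mul, map_add, map_sub, map_pow, map_ofNat]
      ring
    have sep2 : (Δ₂ α γ).Separable := by
      have hder : derivative (Δ₂ α γ) =
          4 * C α * X ^ 3 - 4 * C γ * X ^ 3 - 4 * C α * X - 4 * C γ * X := by
        unfold Δ₂; simp [map_ofNat]; ring
      rw [Polynomial.separable_def, hder]
      refine bez (d := 256 * α * γ * (α - γ) ^ 3)
        (by simp [hA, hC, hAC]) (U := (((256 : Polynomial Qbar) * C α * C γ ^ 3 + (-512 : Polynomial Qbar) * C α ^ 2 * C γ ^ 2 + (256 : Polynomial Qbar) * C α ^ 3 * C γ) + ((64 : Polynomial Qbar) * C γ ^ 4 + (-128 : Polynomial Qbar) * C α * C γ ^ 3 + (128 : Polynomial Qbar) * C α ^ 3 * C γ + (-64 : Polynomial Qbar) * C α ^ 4) * X ^ 2)) (V := (((-16 : Polynomial Qbar) * C γ ^ 4 + (-64 : Polynomial Qbar) * C α * C γ ^ 3 + (160 : Polynomial Qbar) * C α ^ 2 * C γ ^ 2 + (-64 : Polynomial Qbar) * C α ^ 3 * C γ + (-16 : Polynomial Qbar) * C α ^ 4) * X + ((-16 :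 Polynomial Qbar) * C γ ^ 4 + (32 : Polynomial Qbar) * C α * C γ ^ 3 + (-32 : Polynomial Qbar) * C α ^ 3 * C γ + (16 : Polynomial Qbar) * C α ^ 4) * X ^ 3)) ?_
      unfold Δ₂
      simp only [map_mul, map_add, map_sub, map_pow, map_ofNat]
      ring
    have sep3 : (Δ₃ β γ).Separable := by
      have hder : derivative (Δ₃ β γ) = 4 * C γ * X ^ 3 - 8 * C β * X + 4 * C γ * X := by
        unfold Δ₃; simp [map_ofNat]; ring
      rw [Polynomial.separable_def, hder]
      refine bez (d := 256 * β * γ ^ 3 * (β - γ))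
        (by simp [hB, hC, hBC]) (U := (((-256 : Polynomial Qbar) * C β * C γ ^ 3 + (256 : Polynomial Qbar) * C β ^ 2 * C γ ^ 2) + ((64 : Polynomial Qbar) * C γ ^ 4 + (-128 : Polynomial Qbar) * C β * C γ ^ 3) * X ^ 2)) (V := (((-16 : Polynomial Qbar) * C γ ^ 4 + (128 : Polynomial Qbar) * C β * C γ ^ 3 + (-128 : Polynomial Qbar) * C β ^ 2 * C γ ^ 2) * X + ((-16 : Polynomial Qbar) * C γ ^ 4 + (32 : Polynomial Qbar) * C β * C γ ^ 3) * X ^ 3)) ?_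
      unfold Δ₃
      simp only [map_mul, map_add, map_sub, map_pow, map_ofNat]
      ring
    have cop12 : IsCoprime (Δ₁ α β) (Δ₂ α γ) := by
      refine bez (d := 16 * (α - γ) * (α * β - α * γ - β * γ) ^ 2)
        (by simp [hAC, hS]) (U := (((-8 : Polynomial Qbar) * C β * C γ ^ 3 + (-8 : Polynomial Qbar) * C α * C γ ^ 3 + (8 : Polynomial Qbar) * C α * C β * C γ ^ 2 + (8 : Polynomial Qbar) * C α ^ 2 * C β * C γ + (8 : Polynomial Qbar) * C α ^ 3 * C γ + (-8 : Polynomial Qbar) * C α ^ 3 * C β) + ((-4 : Polynomial Qbar) * C β * C γ ^ 3 + (-4 : Polynomial Qbar) * C α * C γ ^ 3 + (12 : Polynomial Qbar) * C α * C β * C γ ^ 2 + (8 : Polynomial Qbar) * C α ^ 2 * C γ ^ 2 + (-12 : Polynomial Qbar) * C α ^ 2 * C β * C γ + (-4 : Polynomial Qbar) * C α ^ 3 * C γ + (4 : Polynomial Qbar) * C α ^ 3 * C β) * X ^ 2)) (V := (((16 : Polynomial Qbar) * C β ^ 2 * C γ ^ 2 + (24 : Polynomial Qbar) * C α * C β *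 C γ ^ 2 + (-32 : Polynomial Qbar) * C α * C β ^ 2 * C γ + (8 : Polynomial Qbar) * C α ^ 2 * C γ ^ 2 + (-32 : Polynomial Qbar) * C α ^ 2 * C β * C γ + (16 : Polynomial Qbar) * C α ^ 2 * C β ^ 2 + (-8 : Polynomial Qbar) * C α ^ 3 * C γ + (8 : Polynomial Qbar) * C α ^ 3 * C β) + ((-4 : Polynomial Qbar) * C α * C β * C γ ^ 2 + (-4 : Polynomial Qbar) * C α ^ 2 * C γ ^ 2 + (8 : Polynomial Qbar) * C α ^ 2 * C β * C γ + (4 : Polynomial Qbar) * C α ^ 3 * C γ + (-4 : Polynomial Qbar) * C α ^ 3 * C β) * X ^ 2)) ?_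
      unfold Δ₁ Δ₂
      simp only [map_mul, map_add, map_sub, map_pow, map_ofNat]
      ring
    have cop13 : IsCoprime (Δ₁ α β) (Δ₃ β γ) := by
      refine bez (d := 16 * γ * (α * β - α * γ - β * γ) ^ 2)
        (by simp [hC, hS]) (U := (((8 : Polynomial Qbar) * C β * C γ ^ 3 + (-16 : Polynomial Qbar) * C β ^ 2 * C γ ^ 2 + (8 : Polynomial Qbar) * C α * C γ ^ 3 + (-24 : Polynomial Qbar) * C α * C β * C γ ^ 2 + (16 : Polynomial Qbar) * C α * C β ^ 2 * C γ) + ((4 : Polynomial Qbar) * C β * C γ ^ 3 + (4 : Polynomial Qbar) * C α * C γ ^ 3 + (-4 : Polynomial Qbar) * C α * C β * C γ ^ 2) * X ^ 2)) (V := (((16 : Polynomial Qbar) * C β ^ 2 * C γ ^ 2 + (24 : Polynomial Qbar) * C α * C β * C γ ^ 2 + (-16 : Polynomial Qbar) * C α * C β ^ 2 * C γ + (8 : Polynomial Qbar) * C α ^ 2 * C γ ^ 2 + (-8 : Polynomial Qbar) * C α ^ 2 * C β * C γ) + ((-4 : Polynomial Qbar) * C α * C β * C γ ^ 2 + (-4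 : Polynomial Qbar) * C α ^ 2 * C γ ^ 2 + (4 : Polynomial Qbar) * C α ^ 2 * C β * C γ) * X ^ 2)) ?_
      unfold Δ₁ Δ₃
      simp only [map_mul, map_add, map_sub, map_pow, map_ofNat]
      ring
    have cop23 : IsCoprime (Δ₂ α γ) (Δ₃ β γ) := by
      refine bez (d := 16 * γ * (α * β - α * γ - β * γ) ^ 2)
        (by simp [hC, hS]) (U := (((8 : Polynomial Qbar) * C β * C γ ^ 3 + (-16 : Polynomial Qbar) * C β ^ 2 * C γ ^ 2 + (8 : Polynomial Qbar) * C α * C γ ^ 3 + (-24 : Polynomial Qbar) * C α * C β * C γ ^ 2 + (16 : Polynomial Qbar) * C α * C β ^ 2 * C γ) + ((4 : Polynomial Qbar) * C β * C γ ^ 3 + (4 : Polynomial Qbar) * C α * C γ ^ 3 + (-4 : Polynomial Qbar) * C α * C β * C γ ^ 2) * X ^ 2)) (V := (((8 : Polynomial Qbar) * C β * C γ ^ 3 + (8 : Polynomial Qbar) * C α * C γ ^ 3 + (8 : Polynomial Qbar) * C α ^ 2 * C γ ^ 2 + (-8 : Polynomial Qbar) * C α ^ 2 * C β * C γ) + ((4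 : Polynomial Qbar) * C β * C γ ^ 3 + (4 : Polynomial Qbar) * C α * C γ ^ 3 + (-8 : Polynomial Qbar) * C α * C β * C γ ^ 2 + (-4 : Polynomial Qbar) * C α ^ 2 * C γ ^ 2 + (4 : Polynomial Qbar) * C α ^ 2 * C β * C γ) * X ^ 2)) ?_
      unfold Δ₂ Δ₃
      simp only [map_mul, map_add, map_sub, map_pow, map_ofNat]
      ring
    exact (sep1.mul sep2 cop12).mul sep3 (cop13.mul_left cop23)
end
end

section
/- Let f, g, h ∈ ℚ̄[t] be pairwise coprime polynomials with f² + g² = h², deg f = 2, deg g ≤ 2 and deg h ≤ 2. Then there exist polynomials s₁, s₂ ∈ ℚ̄[t], each of degree 1, such that f = s₁·s₂, h − g = s₁² and h + g = s₂². -/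
open Polynomial

noncomputable section

lemma exists_sq_eq {p d : Polynomial Qbar} (hassoc : Associated (d ^ 2) p) :
    ∃ s : Polynomial Qbar, s ^ 2 = p := by
  obtain ⟨u, hu⟩ := hassoc
  obtain ⟨c, hc, hcu⟩ := Polynomial.isUnit_iff.mp u.isUnit
  obtain ⟨z, hz⟩ := IsAlgClosed.exists_pow_nat_eq c (n := 2) (by norm_num)
  exact ⟨C z * d, by rw [mul_pow, ← C_pow, hz, hcu, mul_comm]; exact hu⟩

theorem factorization_of_parametrizing_triple (f g h : Polynomial Qbar)
    (hfg : IsCoprime f g) (hfh : IsCoprime f h) (hgh : IsCoprime g h)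
    (hsum : f ^ 2 + g ^ 2 = h ^ 2)
    (hf : f.natDegree = 2) (hg : g.natDegree ≤ 2) (hh : h.natDegree ≤ 2) :
    ∃ s₁ s₂ : Polynomial Qbar, s₁.natDegree = 1 ∧ s₂.natDegree = 1 ∧
      f = s₁ * s₂ ∧ h - g = s₁ ^ 2 ∧ h + g = s₂ ^ 2 := by
  have hf0 : f ≠ 0 := fun h0 => by simp [h0] at hf
  have key : (h - g) * (h + g) = f ^ 2 := by ring_nf; linear_combination -hsum
  have h2 : C (2⁻¹ : Qbar) * 2 = 1 := by
    rw [← map_ofNat (C : Qbar →+* _) 2, ← C_mul]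
    norm_num
  have hcop : IsCoprime (h - g) (h + g) := by
    obtain ⟨u, v, huv⟩ := hgh
    exact ⟨(v - u) * C (2⁻¹ : Qbar), (v + u) * C (2⁻¹ : Qbar), by
      linear_combination 2 * C (2⁻¹ : Qbar) * huv + h2⟩
  -- nonzeroness and degrees
  have hmul0 : (h - g) * (h + g) ≠ 0 := by rw [key]; exact pow_ne_zero 2 hf0
  have hne1 : h - g ≠ 0 := left_ne_zero_of_mul hmul0
  have hne2 : h + g ≠ 0 := right_ne_zero_of_mul hmul0
  have hdegsum : (h - g).natDegree + (h + g).natDegree = 4 := by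
    have := natDegree_mul hne1 hne2
    rw [key, natDegree_pow, hf] at this
    omega
  have hd1le : (h - g).natDegree ≤ 2 := le_trans (natDegree_sub_le _ _) (by omega)
  have hd2le : (h + g).natDegree ≤ 2 := le_trans (natDegree_add_le _ _) (by omega)
  have hd1 : (h - g).natDegree = 2 := by omega
  have hd2 : (h + g).natDegree = 2 := by omega
  -- squares
  obtain ⟨d₁, hd₁⟩ := exists_associated_pow_of_mul_eq_pow' hcop key
  obtain ⟨s₁, hs₁⟩ := exists_sq_eq hd₁
  have key' : (h + g) * (h - g) = f ^ 2 := by rw [mul_comm]; exact key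
  obtain ⟨d₂, hd₂⟩ := exists_associated_pow_of_mul_eq_pow' hcop.symm key'
  obtain ⟨s₂, hs₂⟩ := exists_sq_eq hd₂
  have hs₁deg : s₁.natDegree = 1 := by
    have := congrArg natDegree hs₁
    rw [natDegree_pow, hd1] at this
    omega
  have hs₂deg : s₂.natDegree = 1 := by
    have := congrArg natDegree hs₂
    rw [natDegree_pow, hd2] at this
    omega
  have hsq : (s₁ * s₂) ^ 2 = f ^ 2 := by
    rw [mul_pow, hs₁, hs₂, key]
  have hcases : (f - s₁ * s₂) * (f + s₁ * s₂) = 0 := by linear_combination -hsq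
  rcases mul_eq_zero.mp hcases with h0 | h0
  · exact ⟨s₁, s₂, hs₁deg, hs₂deg, sub_eq_zero.mp h0, hs₁.symm, hs₂.symm⟩
  · refine ⟨-s₁, s₂, ?_, hs₂deg, ?_, ?_, hs₂.symm⟩
    · simpa using hs₁deg
    · have : f = -(s₁ * s₂) := eq_neg_of_add_eq_zero_left h0
      rw [this]; ring
    · rw [← hs₁]; ring
end
end
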